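/- The hv-curvature of the Chern connection satisfies P*(X,Y)Z = P°(X,Y)Z − (D*_{JY}C')(X,Z), where P° is the hv-curvature of the Berwald connection. -/

import Mathlib

/-- Abstract Klein–Grifone setting: the Lie algebra of vector fields on the tangent
bundle `TM` of a manifold `M`, regarded as a module over the smooth functions on `TM`,
together with the natural almost-tangent structure `J`, the Liouville (canonical)
vector field `C`, and the directional-derivative action of vector fields on functions. -/
structure KGSetting where
  /-- vector fields on TM -/
  VF : Type
  /-- smooth functions on TM -/
  Fn : Type
  [vfLie : LieRing VF]
  [vfAlg : LieAlgebra ℝ VF]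
  [fnRing : CommRing Fn]
  [fnAlg : Algebra ℝ Fn]
  [fnModVF : Module Fn VF]
  /-- the directional derivative `X.f` of a function along a vector field -/
  der : VF →ₗ[ℝ] Fn →ₗ[ℝ] Fn
  der_mul : ∀ (X : VF) (f g : Fn), der X (f * g) = der X f * g + f * der X g
  /-- Leibniz rule for the Lie bracket and the `Fn`-module structure -/
  bracket_smul : ∀ (X : VF) (f : Fn) (Y : VF), ⁅X, f • Y⁆ = der X f • Y + f • ⁅X, Y⁆
  /-- the natural almost-tangent structure -/
  J : VF →ₗ[ℝ] VF
  /-- the Liouville (canonical) vector field -/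
  Liouville : VF
  /-- J² = 0 -/
  J_sq : ∀ (X : VF), J (J X) = 0
  /-- the Frölicher–Nijenhuis bracket [J,J] vanishes -/
  JJ : ∀ (X Y : VF), ⁅J X, J Y⁆ = J ⁅J X, Y⁆ + J ⁅X, J Y⁆
  /-- the Frölicher–Nijenhuis bracket [C,J] equals -J -/
  CJ : ∀ (X : VF), ⁅Liouville, J X⁆ = J ⁅Liouville, X⁆ - J X
  /-- the Liouville vector field is vertical -/
  J_Liouville : J Liouville = 0

attribute [instance] KGSetting.vfLie KGSetting.vfAlg KGSetting.fnRing
  KGSetting.fnAlg KGSetting.fnModVF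

/-- A linear connection on `TM` in the Klein–Grifone setting. -/
structure LinConn (K : KGSetting) where
  /-- the covariant derivative `D X Y = ∇_X Y` -/
  D : K.VF → K.VF → K.VF
  addX : ∀ X X' Y, D (X + X') Y = D X Y + D X' Y
  smulX : ∀ (f : K.Fn) X Y, D (f • X) Y = f • D X Y
  addY : ∀ X Y Y', D X (Y + Y') = D X Y + D X Y'
  smulY : ∀ X (f : K.Fn) Y, D X (f • Y) = K.der X f • Y + f • D X Y

namespace LinConn

variable {K : KGSetting} (N : LinConn K)

/-- the classical torsion `T(X,Y) = ∇_X Y − ∇_Y X − [X,Y]` -/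
def tor (X Y : K.VF) : K.VF := N.D X Y - N.D Y X - ⁅X, Y⁆

/-- the classical curvature `K(X,Y)Z = ∇_X ∇_Y Z − ∇_Y ∇_X Z − ∇_{[X,Y]} Z` -/
def curv (X Y Z : K.VF) : K.VF := N.D X (N.D Y Z) - N.D Y (N.D X Z) - N.D ⁅X, Y⁆ Z

end LinConn

/-- A Finsler space `(M,E)` in the Klein–Grifone approach: the canonical spray `S`,
the Barthel connection `Γ = [J,S]` with horizontal/vertical projectors `h`, `v`,
the associated almost-complex structure `F`, the metric `g(X,Y) = Ω(X,FY)`,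
and the Cartan tensors `𝒞` (`Ct`) and `𝒞'` (`Ct'`). -/
structure FinslerKG extends KGSetting where
  /-- the canonical spray -/
  S : VF
  JS : J S = Liouville
  /-- the spray is homogeneous of degree 2: [C,S] = S -/
  S_hom : ⁅Liouville, S⁆ = S
  /-- the Barthel connection -/
  Gam : VF →ₗ[ℝ] VF
  /-- Γ = [J,S] (Frölicher–Nijenhuis bracket) -/
  Gam_def : ∀ (X : VF), Gam X = ⁅J X, S⁆ - J ⁅X, S⁆
  JGam : ∀ (X : VF), J (Gam X) = J X
  GamJ : ∀ (X : VF), Gam (J X) = - J X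
  Gam_sq : ∀ (X : VF), Gam (Gam X) = X
  /-- the Barthel connection is homogeneous: [C,Γ] = 0 -/
  Gam_hom : ∀ (X : VF), ⁅Liouville, Gam X⁆ = Gam ⁅Liouville, X⁆
  /-- horizontal projector h = (I+Γ)/2 -/
  h : VF →ₗ[ℝ] VF
  h_def : ∀ (X : VF), (2:ℝ) • h X = X + Gam X
  /-- vertical projector v = (I−Γ)/2 -/
  v : VF →ₗ[ℝ] VF
  v_def : ∀ (X : VF), (2:ℝ) • v X = X - Gam X
  /-- the Barthel connection has vanishing torsion `t` -/
  torsion_free : ∀ (X Y : VF), v ⁅J X, h Y⁆ + v ⁅h X, J Y⁆ = J ⁅h X, h Y⁆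
  /-- the almost-complex structure of the Barthel connection -/
  F : VF →ₗ[ℝ] VF
  FJ : ∀ (X : VF), F (J X) = h X
  Fh : ∀ (X : VF), F (h X) = - J X
  /-- the metric `g(X,Y) = Ω(X,FY)` on TM -/
  g : VF →ₗ[ℝ] VF →ₗ[ℝ] Fn
  g_symm : ∀ (X Y : VF), g X Y = g Y X
  g_hJ : ∀ (X Y : VF), g (h X) (J Y) = 0
  g_hh : ∀ (X Y : VF), g (h X) (h Y) = g (J X) (J Y)
  /-- the Cartan tensor 𝒞, `Ω(𝒞(X,Y),Z) = ½(L_{JX}(J*g))(Y,Z)` -/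
  Ct : VF →ₗ[ℝ] VF →ₗ[ℝ] VF
  Ct_symm : ∀ (X Y : VF), Ct X Y = Ct Y X
  Ct_sb1 : ∀ (X Y : VF), J (Ct X Y) = 0
  Ct_sb2 : ∀ (X Y : VF), Ct (J X) Y = 0
  Ct_S : ∀ (X : VF), Ct X S = 0
  Ct_def : ∀ (X Y Z : VF), (2:ℝ) • g (Ct X Y) (J Z) =
    der (J X) (g (J Y) (J Z)) - g (J ⁅J X, Y⁆) (J Z) - g (J Y) (J ⁅J X, Z⁆)
  /-- the Cartan tensor 𝒞', `Ω(𝒞'(X,Y),Z) = ½(L_{hX}g)(JY,JZ)` -/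
  Ct' : VF →ₗ[ℝ] VF →ₗ[ℝ] VF
  Ct'_symm : ∀ (X Y : VF), Ct' X Y = Ct' Y X
  Ct'_sb1 : ∀ (X Y : VF), J (Ct' X Y) = 0
  Ct'_sb2 : ∀ (X Y : VF), Ct' (J X) Y = 0
  Ct'_S : ∀ (X : VF), Ct' X S = 0
  Ct'_def : ∀ (X Y Z : VF), (2:ℝ) • g (Ct' X Y) (J Z) =
    der (h X) (g (J Y) (J Z)) - g ⁅h X, J Y⁆ (J Z) - g (J Y) ⁅h X, J Z⁆

namespace FinslerKG

variable (K : FinslerKG)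

/-- the curvature `ℜ(X,Y) = −v[hX,hY]` of the Barthel connection -/
def Rbar (X Y : K.VF) : K.VF := - K.v ⁅K.h X, K.h Y⁆

/-- `∇` is a normal lift of the Barthel connection: `∇J = 0`,
`∇_{JX}JY = J[JX,Y]`, `∇Γ = 0`, and the nonlinear connection induced by `∇`
is the Barthel connection (equivalently `∇C = v`). -/
def IsNormalLift (N : LinConn K.toKGSetting) : Prop :=
  (∀ (X Y : K.VF), N.D X (K.J Y) = K.J (N.D X Y)) ∧
  (∀ (X Y : K.VF), N.D (K.J X) (K.J Y) = K.J ⁅K.J X, Y⁆) ∧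
  (∀ (X Y : K.VF), N.D X (K.Gam Y) = K.Gam (N.D X Y)) ∧
  (∀ (X : K.VF), N.D X K.Liouville = K.v X)

/-- `∇` is horizontally metric: `∇_{hX} g = 0`. -/
def HMetric (N : LinConn K.toKGSetting) : Prop :=
  ∀ (X Y Z : K.VF), K.der (K.h X) (K.g Y Z) =
    K.g (N.D (K.h X) Y) Z + K.g Y (N.D (K.h X) Z)

/-- the classical torsion of `∇` satisfies `J T(hX,hY) = 0`. -/
def JTorFree (N : LinConn K.toKGSetting) : Prop :=
  ∀ (X Y : K.VF), K.J (N.tor (K.h X) (K.h Y)) = 0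

/-- `∇` is the Chern connection of `(M,E)`. -/
def IsChern (N : LinConn K.toKGSetting) : Prop :=
  K.IsNormalLift N ∧ K.HMetric N ∧ K.JTorFree N

/-- the three formulas that completely determine the Chern connection. -/
def ChernEq (N : LinConn K.toKGSetting) : Prop :=
  (∀ (X Y : K.VF), N.D (K.J X) (K.J Y) = K.J ⁅K.J X, Y⁆) ∧
  (∀ (X Y : K.VF), N.D (K.h X) (K.J Y) = K.v ⁅K.h X, K.J Y⁆ + K.Ct' X Y) ∧
  (∀ (X Y : K.VF), N.D X (K.F Y) = K.F (N.D X Y))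

/-- the formulas that completely determine the Cartan connection. -/
def CartanEq (N : LinConn K.toKGSetting) : Prop :=
  (∀ (X Y : K.VF), N.D (K.J X) (K.J Y) = K.J ⁅K.J X, Y⁆ + K.Ct X Y) ∧
  (∀ (X Y : K.VF), N.D (K.h X) (K.J Y) = K.v ⁅K.h X, K.J Y⁆ + K.Ct' X Y) ∧
  (∀ (X Y : K.VF), N.D X (K.F Y) = K.F (N.D X Y))

/-- the formulas that completely determine the Berwald connection. -/
def BerwaldEq (N : LinConn K.toKGSetting) : Prop :=
  (∀ (X Y : K.VF), N.D (K.J X) (K.J Y) = K.J ⁅K.J X, Y⁆) ∧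
  (∀ (X Y : K.VF), N.D (K.h X) (K.J Y) = K.v ⁅K.h X, K.J Y⁆) ∧
  (∀ (X Y : K.VF), N.D X (K.F Y) = K.F (N.D X Y))

/-- the h-curvature `R*(X,Y)Z = K*(hX,hY)JZ` of a connection -/
def Rstar (N : LinConn K.toKGSetting) (X Y Z : K.VF) : K.VF :=
  N.curv (K.h X) (K.h Y) (K.J Z)

/-- the hv-curvature `P*(X,Y)Z = K*(hX,JY)JZ` of a connection -/
def Pstar (N : LinConn K.toKGSetting) (X Y Z : K.VF) : K.VF :=
  N.curv (K.h X) (K.J Y) (K.J Z)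

/-- the covariant derivative `(∇_W 𝒞')(X,Z)` of the Cartan tensor `𝒞'` -/
def DCt' (N : LinConn K.toKGSetting) (W X Z : K.VF) : K.VF :=
  N.D W (K.Ct' X Z) - K.Ct' (N.D W X) Z - K.Ct' X (N.D W Z)

/-- the covariant derivative `(∇_W R)(X,Y)Z` of a vector 3-form (curvature-type tensor) -/
def Dtensor3 (N : LinConn K.toKGSetting) (R : K.VF → K.VF → K.VF → K.VF)
    (W X Y Z : K.VF) : K.VF :=
  N.D W (R X Y Z) - R (N.D W X) Y Z - R X (N.D W Y) Z - R X Y (N.D W Z)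

end FinslerKG

/-!
Both connections satisfy `D_{JX}JY = J[JX,Y]` and `DF = FD`, which force the same operator `D_{JY}`
for both, and on `(hX, JY)` they differ by `𝒞'(X,Y)`. Hence `P* − P°` consists of three
`𝒞'`-terms. As `𝒞'` kills vertical arguments, `D*_{JY}X` and `D*_{JY}Z` may be replaced by
`[JY,X]` and `[JY,Z]` inside `𝒞'`, and the three terms recombine into `−(D*_{JY}𝒞')(X,Z)`
up to `𝒞'([vX,JY],Z)`, which vanishes because `[vX,JY]` is vertical.
-/

namespace FinslerKG

variable (K : FinslerKG)

lemma h_add_v (X : K.VF) : K.h X + K.v X = X := by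
  apply smul_right_injective K.VF (two_ne_zero (α := ℝ))
  simp only [smul_add, K.h_def, K.v_def, two_smul]
  abel

lemma J_v (X : K.VF) : K.J (K.v X) = 0 := by
  apply smul_right_injective K.VF (two_ne_zero (α := ℝ))
  simp only [smul_zero, ← map_smul, K.v_def, map_sub, K.JGam, sub_self]

lemma h_J (X : K.VF) : K.h (K.J X) = 0 := by
  apply smul_right_injective K.VF (two_ne_zero (α := ℝ))
  simp only [smul_zero, K.h_def, K.GamJ, add_neg_cancel]

lemma J_lie_S_of_J_eq_zero {W : K.VF} (hW : K.J W = 0) : K.J ⁅W, K.S⁆ = W := by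
  have hΓ : K.Gam W = -K.J ⁅W, K.S⁆ := by rw [K.Gam_def, hW, zero_lie, zero_sub]
  simpa [hΓ, K.GamJ] using K.Gam_sq W

lemma J_lie_v_S (X : K.VF) : K.J ⁅K.v X, K.S⁆ = K.v X :=
  K.J_lie_S_of_J_eq_zero (K.J_v X)

lemma h_lie_v_J (X Y : K.VF) : K.h ⁅K.v X, K.J Y⁆ = 0 := by
  rw [← K.J_lie_v_S X, K.JJ, map_add, K.h_J, K.h_J, add_zero]

lemma Ct'_J (A : K.VF) : K.Ct' (K.J A) = 0 := by
  ext B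
  rw [K.Ct'_sb2, LinearMap.zero_apply]

lemma Ct'_v (A : K.VF) : K.Ct' (K.v A) = 0 := by
  rw [← K.J_lie_v_S A, K.Ct'_J]

lemma Ct'_h (A : K.VF) : K.Ct' (K.h A) = K.Ct' A := by
  conv_rhs => rw [← K.h_add_v A, map_add, K.Ct'_v, add_zero]

lemma Ct'_apply_J (A B : K.VF) : K.Ct' A (K.J B) = 0 := by
  rw [K.Ct'_symm, K.Ct'_sb2]

lemma Ct'_apply_h (A B : K.VF) : K.Ct' A (K.h B) = K.Ct' A B := by
  rw [K.Ct'_symm, K.Ct'_h, K.Ct'_symm]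

lemma Ct'_lie_h_J (X Y : K.VF) : K.Ct' ⁅K.h X, K.J Y⁆ = K.Ct' ⁅X, K.J Y⁆ := by
  have hX : K.h X = X - K.v X := eq_sub_of_add_eq (K.h_add_v X)
  rw [← K.Ct'_h, hX, sub_lie, map_sub, K.h_lie_v_J, sub_zero, K.Ct'_h]

section Connection

variable {K} (N : LinConn K.toKGSetting)
  (hJJ : ∀ X Y : K.VF, N.D (K.J X) (K.J Y) = K.J ⁅K.J X, Y⁆)
  (hF : ∀ X Y : K.VF, N.D X (K.F Y) = K.F (N.D X Y))
include hJJ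

lemma D_v_J (W Z : K.VF) : N.D (K.v W) (K.J Z) = K.J ⁅K.J ⁅K.v W, K.S⁆, Z⁆ := by
  conv_lhs => rw [← K.J_lie_v_S W]
  exact hJJ _ _

lemma D_J_v (Y W : K.VF) : N.D (K.J Y) (K.v W) = K.J ⁅K.J Y, ⁅K.v W, K.S⁆⁆ := by
  conv_lhs => rw [← K.J_lie_v_S W]
  exact hJJ _ _

include hF

lemma D_J_apply (Y X : K.VF) :
    N.D (K.J Y) X = K.h ⁅K.J Y, X⁆ + K.J ⁅K.J Y, ⁅K.v X, K.S⁆⁆ := by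
  conv_lhs => rw [← K.h_add_v X, N.addY, ← K.FJ X, hF, hJJ, K.FJ, D_J_v N hJJ]

lemma Ct'_D_J_left (X Y Z : K.VF) : K.Ct' (N.D (K.J Y) X) Z = K.Ct' ⁅K.J Y, X⁆ Z := by
  rw [D_J_apply N hJJ hF, map_add, K.Ct'_J, add_zero, K.Ct'_h]

lemma Ct'_D_J_right (X Y Z : K.VF) : K.Ct' X (N.D (K.J Y) Z) = K.Ct' X ⁅K.J Y, Z⁆ := by
  rw [D_J_apply N hJJ hF, map_add, K.Ct'_apply_J, add_zero, K.Ct'_apply_h]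

lemma DCt'_J (X Y Z : K.VF) : K.DCt' N (K.J Y) X Z =
    N.D (K.J Y) (K.Ct' X Z) - K.Ct' ⁅K.J Y, X⁆ Z - K.Ct' X ⁅K.J Y, Z⁆ := by
  rw [DCt', Ct'_D_J_left N hJJ hF, Ct'_D_J_right N hJJ hF]

end Connection

section ChernBerwald

variable {K} {Nch Nb : LinConn K.toKGSetting} (hch : K.ChernEq Nch) (hb : K.BerwaldEq Nb)
include hch hb

lemma ChernEq.D_J_eq_berwald (Y X : K.VF) : Nch.D (K.J Y) X = Nb.D (K.J Y) X := by
  rw [D_J_apply Nch hch.1 hch.2.2, D_J_apply Nb hb.1 hb.2.2]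

lemma ChernEq.D_J_eq_berwald_add (W Z : K.VF) :
    Nch.D W (K.J Z) = Nb.D W (K.J Z) + K.Ct' W Z := by
  conv_lhs => rw [← K.h_add_v W, Nch.addX, hch.2.1, D_v_J Nch hch.1]
  conv_rhs => rw [← K.h_add_v W, Nb.addX, hb.2.1, D_v_J Nb hb.1, map_add, K.Ct'_v, K.Ct'_h]
  rw [LinearMap.add_apply, LinearMap.zero_apply, add_zero]
  abel

lemma ChernEq.curv_h_J_J_sub_berwald (X Y Z : K.VF) :
    Nch.curv (K.h X) (K.J Y) (K.J Z) - Nb.curv (K.h X) (K.J Y) (K.J Z) =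
      K.Ct' X ⁅K.J Y, Z⁆ - Nch.D (K.J Y) (K.Ct' X Z) - K.Ct' ⁅X, K.J Y⁆ Z := by
  simp only [LinConn.curv, hch.1, hb.1, hch.D_J_eq_berwald_add hb, Nch.addY,
    hch.D_J_eq_berwald hb, K.Ct'_h, K.Ct'_lie_h_J]
  abel

end ChernBerwald

end FinslerKG

/-- The hv-curvature of the Chern connection satisfies
`P*(X,Y)Z = P°(X,Y)Z − (D*_{JY}𝒞')(X,Z)`, where `P°` is the hv-curvature of the
Berwald connection. -/
theorem chern_hv_curvature (K : FinslerKG) (Nch Nb : LinConn K.toKGSetting)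
    (hch : K.ChernEq Nch) (hb : K.BerwaldEq Nb) :
    ∀ X Y Z : K.VF,
      Nch.curv (K.h X) (K.J Y) (K.J Z) =
        Nb.curv (K.h X) (K.J Y) (K.J Z) - K.DCt' Nch (K.J Y) X Z := by
  intro X Y Z
  have hdiff := hch.curv_h_J_J_sub_berwald hb X Y Z
  calc Nch.curv (K.h X) (K.J Y) (K.J Z)
      = Nb.curv (K.h X) (K.J Y) (K.J Z)
          + (Nch.curv (K.h X) (K.J Y) (K.J Z) - Nb.curv (K.h X) (K.J Y) (K.J Z)) :=
        (add_sub_cancel _ _).symm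
    _ = Nb.curv (K.h X) (K.J Y) (K.J Z) - K.DCt' Nch (K.J Y) X Z := by
        rw [hdiff, FinslerKG.DCt'_J Nch hch.1 hch.2.2, ← lie_skew X (K.J Y), map_neg, LinearMap.neg_apply]
        abel
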